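/- arXiv:1505.03568 — 2 statements merged into one kernel-verified Lean document; each statement's English description precedes it below -/
import Mathlib

section
/- Let N ≥ 3, a₀ ∈ ℝ and b₀ > b_*(a₀). Then the interval I₁(a₀,b₀) = (q_*(a₀,b₀), q^*(a₀,b₀)) intersects (2, +∞) if and only if b₀ > b̲(a₀), where b̲(a₀) = -∞ for a₀ < -(2N-2) and b̲(a₀) = min(a₀, -2) for a₀ ≥ -(2N-2). -/
theorem stmt_15 (N : ℕ) (hN : 3 ≤ N) (a₀ b₀ : ℝ) (qs : ℝ) (qu bStar bLow : EReal)
    (hqs : qs = if a₀ < -(2 * (N:ℝ) - 2) then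
        max 1 (max (2 * ((N:ℝ) + b₀) / ((N:ℝ) + a₀))
          (2 * (2 * (N:ℝ) - 2 + 2 * b₀ - a₀) / (2 * (N:ℝ) - 2 + a₀)))
      else if a₀ < -(N:ℝ) then max 1 (2 * ((N:ℝ) + b₀) / ((N:ℝ) + a₀))
      else 1)
    (hqu : qu = if a₀ ≤ -(2 * (N:ℝ) - 2) then (⊤ : EReal)
      else if a₀ ≤ -(N:ℝ) then
        ((2 * (2 * (N:ℝ) - 2 + 2 * b₀ - a₀) / (2 * (N:ℝ) - 2 + a₀) : ℝ) : EReal)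
      else if a₀ < -2 then
        ((min (2 * ((N:ℝ) + b₀) / ((N:ℝ) + a₀))
          (2 * (2 * (N:ℝ) - 2 + 2 * b₀ - a₀) / (2 * (N:ℝ) - 2 + a₀)) : ℝ) : EReal)
      else ((2 * ((N:ℝ) + b₀) / ((N:ℝ) - 2) : ℝ) : EReal))
    (hbStar : bStar = if a₀ < -(2 * (N:ℝ) - 2) then (⊥ : EReal)
      else ((min a₀ (min (-((N:ℝ) - a₀) / 2) (-((N:ℝ) + 2) / 2)) : ℝ) : EReal))
    (hbLow : bLow = if a₀ < -(2 * (N:ℝ) - 2) then (⊥ : EReal)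
      else ((min a₀ (-2) : ℝ) : EReal))
    (hb₀ : bStar < (b₀ : EReal)) :
    (∃ q : ℝ, qs < q ∧ (q : EReal) < qu ∧ 2 < q) ↔ bLow < (b₀ : EReal) := by
  have hN3 : (3:ℝ) ≤ (N:ℝ) := by exact_mod_cast hN
  subst hqs hqu hbStar hbLow
  by_cases h1 : a₀ < -(2 * (N:ℝ) - 2)
  · simp only [if_pos h1, if_pos h1.le]
    constructor
    · intro _; exact EReal.bot_lt_coe b₀
    · intro _
      refine ⟨max (max 1 (max (2 * ((N:ℝ) + b₀) / ((N:ℝ) + a₀))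
          (2 * (2 * (N:ℝ) - 2 + 2 * b₀ - a₀) / (2 * (N:ℝ) - 2 + a₀)))) 2 + 1,
        ?_, EReal.coe_lt_top _, ?_⟩
      · have := le_max_left (max 1 (max (2 * ((N:ℝ) + b₀) / ((N:ℝ) + a₀))
          (2 * (2 * (N:ℝ) - 2 + 2 * b₀ - a₀) / (2 * (N:ℝ) - 2 + a₀)))) (2:ℝ)
        linarith
      · have := le_max_right (max 1 (max (2 * ((N:ℝ) + b₀) / ((N:ℝ) + a₀))
          (2 * (2 * (N:ℝ) - 2 + 2 * b₀ - a₀) / (2 * (N:ℝ) - 2 + a₀)))) (2:ℝ)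
        linarith
  · have h1' : -(2 * (N:ℝ) - 2) ≤ a₀ := not_lt.mp h1
    simp only [if_neg h1] at hb₀ ⊢
    rw [EReal.coe_lt_coe_iff] at hb₀
    by_cases h2 : a₀ ≤ -(2 * (N:ℝ) - 2)
    · -- a₀ = -(2N-2)
      have heq : a₀ = -(2 * (N:ℝ) - 2) := le_antisymm h2 h1'
      have hlt : a₀ < -(N:ℝ) := by rw [heq]; linarith
      simp only [if_pos h2, if_pos hlt]
      constructor
      · intro _
        rw [EReal.coe_lt_coe_iff]
        have h3 : min a₀ (-2) ≤ min a₀ (min (-((N:ℝ) - a₀) / 2) (-((N:ℝ) + 2) / 2)) := by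
          rw [heq]
          have ha : -(2 * (N:ℝ) - 2) ≤ -2 := by linarith
          rw [min_eq_left ha]
          refine le_min le_rfl (le_min (by linarith) (by linarith))
        linarith [lt_of_le_of_lt h3 hb₀]
      · intro _
        refine ⟨max (max 1 (2 * ((N:ℝ) + b₀) / ((N:ℝ) + a₀))) 2 + 1,
          ?_, EReal.coe_lt_top _, ?_⟩
        · have := le_max_left (max 1 (2 * ((N:ℝ) + b₀) / ((N:ℝ) + a₀))) (2:ℝ); linarith
        · have := le_max_right (max 1 (2 * ((N:ℝ) + b₀) / ((N:ℝ) + a₀))) (2:ℝ); linarith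
    · have h2' : -(2 * (N:ℝ) - 2) < a₀ := not_le.mp h2
      have hD : (0:ℝ) < 2 * (N:ℝ) - 2 + a₀ := by linarith
      simp only [if_neg h2]
      by_cases h3 : a₀ ≤ -(N:ℝ)
      · -- case C
        have hmin : min a₀ (-2:ℝ) = a₀ := min_eq_left (by linarith)
        simp only [if_pos h3, hmin]
        constructor
        · rintro ⟨q, hq1, hq2, hq3⟩
          rw [EReal.coe_lt_coe_iff] at hq2 ⊢
          have hQ : (2:ℝ) < 2 * (2 * (N:ℝ) - 2 + 2 * b₀ - a₀) / (2 * (N:ℝ) - 2 + a₀) :=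
            lt_trans hq3 hq2
          rw [lt_div_iff₀ hD] at hQ
          linarith
        · intro hb
          rw [EReal.coe_lt_coe_iff] at hb
          set Q := 2 * (2 * (N:ℝ) - 2 + 2 * b₀ - a₀) / (2 * (N:ℝ) - 2 + a₀) with hQdef
          have hQ2 : (2:ℝ) < Q := by
            rw [hQdef, lt_div_iff₀ hD]; linarith
          have hqs2 : (if a₀ < -(N:ℝ) then max 1 (2 * ((N:ℝ) + b₀) / ((N:ℝ) + a₀)) else (1:ℝ)) < 2 := by
            split_ifs with h4
            · have hna : (N:ℝ) + a₀ < 0 := by linarith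
              have hr : 2 * ((N:ℝ) + b₀) / ((N:ℝ) + a₀) < 2 := by
                rw [div_lt_iff_of_neg hna]; linarith
              exact max_lt one_lt_two hr
            · norm_num
          refine ⟨(2 + Q) / 2, by linarith, ?_, by linarith⟩
          rw [EReal.coe_lt_coe_iff]; linarith
      · have h3' : -(N:ℝ) < a₀ := not_le.mp h3
        have h3'' : ¬ a₀ < -(N:ℝ) := not_lt.mpr h3'.le
        have hNa : (0:ℝ) < (N:ℝ) + a₀ := by linarith
        simp only [if_pos h3, if_neg h3, if_neg h3'']
        by_cases h4 : a₀ < -2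
        · -- case D
          have hmin : min a₀ (-2:ℝ) = a₀ := min_eq_left (by linarith)
          simp only [if_pos h4, hmin]
          constructor
          · rintro ⟨q, hq1, hq2, hq3⟩
            rw [EReal.coe_lt_coe_iff] at hq2 ⊢
            have hr : (2:ℝ) < 2 * ((N:ℝ) + b₀) / ((N:ℝ) + a₀) :=
              lt_of_lt_of_le (lt_trans hq3 hq2) (min_le_left _ _)
            rw [lt_div_iff₀ hNa] at hr
            linarith
          · intro hb
            rw [EReal.coe_lt_coe_iff] at hb
            have hr : (2:ℝ) < 2 * ((N:ℝ) + b₀) / ((N:ℝ) + a₀) := by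
              rw [lt_div_iff₀ hNa]; linarith
            have hQ : (2:ℝ) < 2 * (2 * (N:ℝ) - 2 + 2 * b₀ - a₀) / (2 * (N:ℝ) - 2 + a₀) := by
              rw [lt_div_iff₀ hD]; linarith
            have hU : (2:ℝ) < min (2 * ((N:ℝ) + b₀) / ((N:ℝ) + a₀))
                (2 * (2 * (N:ℝ) - 2 + 2 * b₀ - a₀) / (2 * (N:ℝ) - 2 + a₀)) := lt_min hr hQ
            refine ⟨(2 + min (2 * ((N:ℝ) + b₀) / ((N:ℝ) + a₀))
                (2 * (2 * (N:ℝ) - 2 + 2 * b₀ - a₀) / (2 * (N:ℝ) - 2 + a₀))) / 2,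
              by linarith, ?_, by linarith⟩
            rw [EReal.coe_lt_coe_iff]; linarith
        · -- case E
          have h4' : (-2:ℝ) ≤ a₀ := not_lt.mp h4
          have hmin : min a₀ (-2:ℝ) = -2 := min_eq_right h4'
          have hN2 : (0:ℝ) < (N:ℝ) - 2 := by linarith
          simp only [if_neg h4, hmin]
          constructor
          · rintro ⟨q, hq1, hq2, hq3⟩
            rw [EReal.coe_lt_coe_iff] at hq2 ⊢
            have hr : (2:ℝ) < 2 * ((N:ℝ) + b₀) / ((N:ℝ) - 2) := lt_trans hq3 hq2
            rw [lt_div_iff₀ hN2] at hr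
            linarith
          · intro hb
            rw [EReal.coe_lt_coe_iff] at hb
            have hr : (2:ℝ) < 2 * ((N:ℝ) + b₀) / ((N:ℝ) - 2) := by
              rw [lt_div_iff₀ hN2]; linarith
            refine ⟨(2 + 2 * ((N:ℝ) + b₀) / ((N:ℝ) - 2)) / 2, by linarith, ?_, by linarith⟩
            rw [EReal.coe_lt_coe_iff]; linarith
end

section
/- Let N ≥ 3 and a, b ∈ ℝ. Define q_{**}(a,b) = max(1, 2(N+b)/(N-2)) if a ≤ -2, and q_{**}(a,b) = max(1, 2(N+b)/(N+a), 2(2N-2+2b-a)/(2N-2+a)) if a > -2. Then the interval I₂(a,b) = (q_{**}(a,b), +∞) intersects (1,2) if and only if b < max(a, -2). -/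
theorem stmt_16 (N : ℕ) (hN : 3 ≤ N) (a b : ℝ) (qss : ℝ)
    (hqss : qss = if a ≤ -2 then max 1 (2 * ((N:ℝ) + b) / ((N:ℝ) - 2))
      else max 1 (max (2 * ((N:ℝ) + b) / ((N:ℝ) + a))
        (2 * (2 * (N:ℝ) - 2 + 2 * b - a) / (2 * (N:ℝ) - 2 + a)))) :
    (Set.Ioi qss ∩ Set.Ioo (1:ℝ) 2).Nonempty ↔ b < max a (-2) := by
  have hN3 : (3:ℝ) ≤ N := by exact_mod_cast hN
  have hq1 : 1 ≤ qss := by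
    rw [hqss]; split <;> simp
  have key : (Set.Ioi qss ∩ Set.Ioo (1:ℝ) 2).Nonempty ↔ qss < 2 := by
    constructor
    · rintro ⟨x, hx1, hx2, hx3⟩
      exact lt_trans hx1 hx3
    · intro h
      exact ⟨(qss + 2) / 2, by simp only [Set.mem_Ioi]; linarith,
        by constructor <;> linarith⟩
  rw [key, hqss]
  split_ifs with ha
  · rw [max_eq_right (by linarith : a ≤ -2), max_lt_iff]
    constructor
    · rintro ⟨-, h⟩
      rw [div_lt_iff₀ (by linarith : (0:ℝ) < (N:ℝ) - 2)] at h; linarith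
    · intro h
      refine ⟨by norm_num, ?_⟩
      rw [div_lt_iff₀ (by linarith : (0:ℝ) < (N:ℝ) - 2)]; linarith
  · push_neg at ha
    rw [max_eq_left (by linarith : -2 ≤ a), max_lt_iff, max_lt_iff]
    have h1 : (0:ℝ) < (N:ℝ) + a := by linarith
    have h2 : (0:ℝ) < 2 * (N:ℝ) - 2 + a := by linarith
    constructor
    · rintro ⟨-, h, -⟩
      rw [div_lt_iff₀ h1] at h; linarith
    · intro h
      refine ⟨by norm_num, ?_, ?_⟩
      · rw [div_lt_iff₀ h1]; linarith
      · rw [div_lt_iff₀ h2]; linarith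
end
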